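/- Let A, S, N be n×n real matrices, ω ∈ ℝ, f ∈ ℝⁿ, and n_s a natural number. Define the full DL-HIM cycle G(u) = M_N(M_S^{n_s}(u)), where M_S(u) = u + ω S (f − A u) and M_N(v) = v + N (f − A v) with N acting linearly on the residual. Set M = ω · (∑_{i=0}^{n_s − 1} S (I − ω A S)^i) + N (I − ω A S)^{n_s}. If the matrix M is invertible, then for every u ∈ ℝⁿ, G(u) = u if and only if f − A u = 0; that is, the fixed points of the DL-HIM iteration are exactly the solutions of the linear system, and no false fixed points exist. -/
import Mathlib


/-- For a DL-HIM with linear neural operator `N`, if the matrix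
`M = ω ∑_{i<n_s} S (I − ω A S)^i + N (I − ω A S)^{n_s}` is invertible, then
the fixed points of the full-cycle map `G = M_N ∘ M_S^[n_s]` are exactly the
solutions of `A u = f`; i.e. no false fixed points exist. -/
theorem dlhim_no_false_fixed_points (n : ℕ)
    (A S N : Matrix (Fin n) (Fin n) ℝ) (ω : ℝ) (f : Fin n → ℝ) (ns : ℕ)
    (hM : IsUnit (ω • (∑ i ∈ Finset.range ns, S * (1 - ω • (A * S)) ^ i)
      + N * (1 - ω • (A * S)) ^ ns)) :
    ∀ u : Fin n → ℝ,
      (fun v => v + N.mulVec (f - A.mulVec v))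
          ((fun v => v + ω • S.mulVec (f - A.mulVec v))^[ns] u) = u
        ↔ f - A.mulVec u = 0 := by
  intro u
  set B : Matrix (Fin n) (Fin n) ℝ := 1 - ω • (A * S) with hB
  set r : Fin n → ℝ := f - A.mulVec u with hr
  -- iterate formula and residual formula, by simultaneous induction
  have key : ∀ k : ℕ,
      (fun v => v + ω • S.mulVec (f - A.mulVec v))^[k] u
        = u + (ω • (∑ i ∈ Finset.range k, S * B ^ i)).mulVec r
      ∧ f - A.mulVec ((fun v => v + ω • S.mulVec (f - A.mulVec v))^[k] u)
        = (B ^ k).mulVec r := by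
    intro k
    induction k with
    | zero =>
      constructor
      · simp [Matrix.zero_mulVec]
      · simp [hr]
    | succ k ih =>
      obtain ⟨ih1, ih2⟩ := ih
      have hstep : (fun v => v + ω • S.mulVec (f - A.mulVec v))^[k+1] u
          = (fun v => v + ω • S.mulVec (f - A.mulVec v))^[k] u
            + ω • S.mulVec (f - A.mulVec ((fun v => v + ω • S.mulVec (f - A.mulVec v))^[k] u)) := by
        rw [Function.iterate_succ_apply']
      have h1 : (fun v => v + ω • S.mulVec (f - A.mulVec v))^[k+1] u
          = u + (ω • (∑ i ∈ Finset.range (k+1), S * B ^ i)).mulVec r := by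
        rw [hstep, ih2, ih1, Finset.sum_range_succ]
        rw [smul_add, Matrix.add_mulVec, ← add_assoc]
        congr 1
        rw [Matrix.smul_mulVec, ← Matrix.mulVec_mulVec]
      refine ⟨h1, ?_⟩
      rw [h1, Matrix.mulVec_add]
      have hsplit : f - (A.mulVec u
            + A.mulVec ((ω • (∑ i ∈ Finset.range (k+1), S * B ^ i)).mulVec r))
          = r - A.mulVec ((ω • (∑ i ∈ Finset.range (k+1), S * B ^ i)).mulVec r) := by
        rw [hr]; abel
      rw [hsplit]
      have tele : A.mulVec ((ω • (∑ i ∈ Finset.range (k+1), S * B ^ i)).mulVec r)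
          = r - (B ^ (k+1)).mulVec r := by
        rw [Matrix.mulVec_mulVec]
        have hmat : A * (ω • (∑ i ∈ Finset.range (k+1), S * B ^ i)) = 1 - B ^ (k+1) := by
          have e1 : A * (ω • (∑ i ∈ Finset.range (k+1), S * B ^ i))
              = (1 - B) * ∑ i ∈ Finset.range (k+1), B ^ i := by
            rw [mul_smul_comm, Finset.mul_sum, Finset.smul_sum, Finset.mul_sum]
            refine Finset.sum_congr rfl fun i _ => ?_
            have h1B : (1 : Matrix (Fin n) (Fin n) ℝ) - B = ω • (A * S) := by
              rw [hB]; abel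
            rw [h1B, smul_mul_assoc, mul_assoc]
          rw [e1]
          have e2 : ((1 : Matrix (Fin n) (Fin n) ℝ) - B) * ∑ i ∈ Finset.range (k+1), B ^ i
              = -((B - 1) * ∑ i ∈ Finset.range (k+1), B ^ i) := by
            rw [← neg_mul, neg_sub]
          rw [e2, mul_geom_sum, neg_sub]
        rw [hmat, Matrix.sub_mulVec, Matrix.one_mulVec]
      rw [tele]
      abel
  obtain ⟨k1, k2⟩ := key ns
  set M : Matrix (Fin n) (Fin n) ℝ :=
    ω • (∑ i ∈ Finset.range ns, S * (1 - ω • (A * S)) ^ i)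
      + N * (1 - ω • (A * S)) ^ ns with hMdef
  have hG : (fun v => v + N.mulVec (f - A.mulVec v))
      ((fun v => v + ω • S.mulVec (f - A.mulVec v))^[ns] u) = u + M.mulVec r := by
    simp only []
    rw [k2, k1, hMdef, ← hB, Matrix.add_mulVec, Matrix.mulVec_mulVec, add_assoc]
  rw [hG]
  constructor
  · intro h
    have h0 : M.mulVec r = 0 := by
      have h' := h
      nth_rewrite 2 [← add_zero u] at h'
      exact add_left_cancel h'
    have hinv := hM.unit.inv_mul
    rw [hM.unit_spec] at hinv
    have : r = ((hM.unit⁻¹ : (Matrix (Fin n) (Fin n) ℝ)ˣ) : Matrix (Fin n) (Fin n) ℝ).mulVec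
        (M.mulVec r) := by
      rw [Matrix.mulVec_mulVec, hinv, Matrix.one_mulVec]
    rw [this, h0, Matrix.mulVec_zero]
  · intro h
    rw [h, Matrix.mulVec_zero, add_zero]
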